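/- arXiv:2405.09670 — 2 statements merged into one kernel-verified Lean document; each statement's English description precedes it below -/
import Mathlib

section
/- The operator T_{α,β} is left invertible: T*_{α,β}T_{α,β} is an invertible operator; equivalently, there exists a bounded operator L on H with L T_{α,β} = I, and T_{α,β} is bounded below. -/
open scoped ComplexConjugate

noncomputable section

/-- The Hilbert space `H = ℓ²(ℕ, ℂ)`. -/
abbrev H : Type := lp (fun _ : ℕ => ℂ) 2

/-- The standard orthonormal basis vectors of `ℓ²(ℕ, ℂ)`. -/
noncomputable def e (n : ℕ) : H := lp.single 2 n (1 : ℂ)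

/-!
The Gram matrix of the vectors `T e n` is the identity except for its `(0, 0)` entry
`‖T e₀‖² = |α|²|β|² + |β|² = 1 - |α|⁴`, so `T* T = 1 - |α|⁴ P` with `P` the orthogonal projection
onto `e₀`. As `P` is idempotent and `|α| < 1`, this operator is invertible, with inverse
`1 + |α|⁴ / (1 - |α|⁴) P`; then `(T* T)⁻¹ T*` is a bounded left inverse of `T`, and a bounded
left inverse `L` gives `‖x‖ ≤ ‖L‖ ‖T x‖`.
-/

open ContinuousLinearMap InnerProductSpace

theorem IsIdempotentElem.isUnit_one_sub_smul {R A : Type*} [Field R] [Ring A] [Algebra R A]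
    {p : A} (hp : IsIdempotentElem p) {c : R} (hc : c ≠ 1) : IsUnit (1 - c • p) := by
  have hd : c / (1 - c) * (1 - c) = c := div_mul_cancel₀ _ (sub_ne_zero.mpr hc.symm)
  refine ⟨⟨1 - c • p, 1 + (c / (1 - c)) • p, ?_, ?_⟩, rfl⟩ <;>
  · simp only [sub_mul, mul_add, add_mul, mul_sub, one_mul, mul_one, smul_mul_smul, hp.eq]
    match_scalars
    · rfl
    · linear_combination hd

theorem ContinuousLinearMap.exists_pos_mul_norm_le_of_comp_eq_id {𝕜 E F : Type*}
    [NontriviallyNormedField 𝕜] [SeminormedAddCommGroup E] [SeminormedAddCommGroup F]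
    [NormedSpace 𝕜 E] [NormedSpace 𝕜 F] {L : F →L[𝕜] E} {T : E →L[𝕜] F}
    (h : L ∘L T = .id 𝕜 E) : ∃ c : ℝ, 0 < c ∧ ∀ x, c * ‖x‖ ≤ ‖T x‖ := by
  refine ⟨(‖L‖ + 1)⁻¹, by positivity, fun x => ?_⟩
  rw [inv_mul_le_iff₀ (by positivity)]
  calc ‖x‖ = ‖L (T x)‖ := by rw [← comp_apply, h, id_apply]
    _ ≤ ‖L‖ * ‖T x‖ := L.le_opNorm (T x)
    _ ≤ (‖L‖ + 1) * ‖T x‖ := by gcongr; linarith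

theorem exists_mul_eq_one_of_isUnit_mul {M : Type*} [Monoid M] {a b : M} (h : IsUnit (b * a)) :
    ∃ l, l * a = 1 := by
  obtain ⟨v, hv⟩ := h.exists_left_inv
  exact ⟨v * b, by rw [mul_assoc, hv]⟩

theorem inner_e_left (n : ℕ) (x : H) : inner ℂ (e n) x = x n := by
  simp [e, lp.inner_single_left]

theorem inner_e_e (m n : ℕ) : inner ℂ (e m) (e n) = if m = n then 1 else 0 := by
  rw [inner_e_left, e, lp.single_apply, Pi.single_apply]

theorem norm_e (n : ℕ) : ‖e n‖ = 1 := by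
  simp [e, lp.norm_single]

theorem ext_inner_e {x y : H} (h : ∀ n, inner ℂ (e n) x = inner ℂ (e n) y) : x = y :=
  lp.ext <| funext fun n => by simpa [inner_e_left] using h n

theorem continuousLinearMap_ext_e {F : Type*} [AddCommMonoid F] [Module ℂ F]
    [TopologicalSpace F] [T2Space F] {A B : H →L[ℂ] F} (h : ∀ n, A (e n) = B (e n)) : A = B :=
  lp.ext_continuousLinearMap ENNReal.ofNat_ne_top fun n => ContinuousLinearMap.ext_ring (h n)

section

variable {α β : ℂ} {T : H →L[ℂ] H}

theorem inner_apply_e_apply_e (hnorm : ‖α‖ ^ 2 + ‖β‖ ^ 2 = 1)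
    (hT0 : T (e 0) = (α * conj β) • e 0 + β • e 1) (hTn : ∀ n : ℕ, 1 ≤ n → T (e n) = e (n + 1))
    (m n : ℕ) :
    inner ℂ (T (e m)) (T (e n)) =
      inner ℂ (e m) (e n) - (‖α‖ : ℂ) ^ 4 * inner ℂ (e m) (e 0) * inner ℂ (e 0) (e n) := by
  rcases m with _ | m <;> rcases n with _ | n
  · have hnorm' : (‖α‖ : ℂ) ^ 2 + (‖β‖ : ℂ) ^ 2 = 1 := by exact_mod_cast hnorm
    simp only [hT0, inner_add_left, inner_add_right, inner_smul_left, inner_smul_right, inner_e_e]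
    norm_num
    linear_combination β * conj β * Complex.mul_conj' α
      + ((‖α‖ : ℂ) ^ 2 + 1) * (Complex.mul_conj' β + hnorm')
  · simp [hT0, hTn (n + 1) (by omega), inner_e_e]
  · simp [hT0, hTn (m + 1) (by omega), inner_e_e]
  · simp [hTn (m + 1) (by omega), hTn (n + 1) (by omega), inner_e_e]

theorem adjoint_comp_self_eq_one_sub_smul_rankOne (hnorm : ‖α‖ ^ 2 + ‖β‖ ^ 2 = 1)
    (hT0 : T (e 0) = (α * conj β) • e 0 + β • e 1) (hTn : ∀ n : ℕ, 1 ≤ n → T (e n) = e (n + 1)) :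
    adjoint T ∘L T = 1 - (‖α‖ : ℂ) ^ 4 • rankOne ℂ (e 0) (e 0) := by
  refine continuousLinearMap_ext_e fun n => ext_inner_e fun m => ?_
  rw [comp_apply, adjoint_inner_right, inner_apply_e_apply_e hnorm hT0 hTn, sub_apply,
    one_apply_eq_self, smul_apply, inner_sub_right, inner_smul_right, inner_right_rankOne_apply,
    mul_assoc]

end

theorem T_left_invertible_general (α β : ℂ) (hβ : β ≠ 0)
    (hnorm : ‖α‖ ^ 2 + ‖β‖ ^ 2 = 1)
    (T : H →L[ℂ] H)
    (hT0 : T (e 0) = (α * conj β) • e 0 + β • e 1)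
    (hTn : ∀ n : ℕ, 1 ≤ n → T (e n) = e (n + 1)) :
    IsUnit (ContinuousLinearMap.adjoint T ∘L T) ∧
      (∃ L : H →L[ℂ] H, L ∘L T = ContinuousLinearMap.id ℂ H) ∧
      (∃ c : ℝ, 0 < c ∧ ∀ x : H, c * ‖x‖ ≤ ‖T x‖) := by
  have hα : ‖α‖ < 1 := by
    have hβ_pos := norm_pos_iff.mpr hβ
    nlinarith [norm_nonneg α]
  have hα4 : (‖α‖ : ℂ) ^ 4 ≠ 1 := by
    exact_mod_cast (pow_lt_one₀ (norm_nonneg α) hα (by norm_num)).ne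
  have hunit : IsUnit (adjoint T ∘L T) := by
    rw [adjoint_comp_self_eq_one_sub_smul_rankOne hnorm hT0 hTn]
    exact (isIdempotentElem_rankOne_self (norm_e 0)).isUnit_one_sub_smul hα4
  obtain ⟨L, hL⟩ := exists_mul_eq_one_of_isUnit_mul hunit
  exact ⟨hunit, ⟨L, hL⟩, exists_pos_mul_norm_le_of_comp_eq_id hL⟩

/-- `T_{α,β}` is left invertible: `T*T` is invertible, there is a bounded left inverse,
and `T` is bounded below. -/
theorem T_left_invertible (α β : ℂ) (hα : α ≠ 0) (hβ : β ≠ 0)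
    (hnorm : ‖α‖ ^ 2 + ‖β‖ ^ 2 = 1)
    (T : H →L[ℂ] H)
    (hT0 : T (e 0) = (α * conj β) • e 0 + β • e 1)
    (hTn : ∀ n : ℕ, 1 ≤ n → T (e n) = e (n + 1)) :
    IsUnit (ContinuousLinearMap.adjoint T ∘L T) ∧
      (∃ L : H →L[ℂ] H, L ∘L T = ContinuousLinearMap.id ℂ H) ∧
      (∃ c : ℝ, 0 < c ∧ ∀ x : H, c * ‖x‖ ≤ ‖T x‖) :=
  T_left_invertible_general α β hβ hnorm T hT0 hTn

end
end

section
/- The operator T_{α,β} is analytic: the intersection over all n ≥ 1 of the ranges of its powers is trivial, i.e., ⋂_{n≥1} T_{α,β}^n(H) = {0}. -/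
open scoped ComplexConjugate

noncomputable section

/-!
In coordinates, with `c = α β̄`, the operator acts by `(Tz)₀ = c z₀`, `(Tz)₁ = β z₀` and
`(Tz)ₖ₊₂ = zₖ₊₁`, so `y = T^(j+i+1) z` satisfies `yᵢ₊₁ = β cʲ z₀ = cʲ yⱼ₊ᵢ₊₁`.
Since `|c| ≤ (|α|² + |β|²) / 2 = 1/2` and the coordinates of an `ℓ²` vector tend to `0`,
a vector lying in every range `T^n(H)` has `yᵢ₊₁ = 0` for all `i`. Writing it as `y = Tz`,
`β z₀ = y₁ = 0` then forces `y₀ = c z₀ = 0`.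
-/

open Filter Topology
open scoped ENNReal

theorem lp.tendsto_norm_apply_cofinite {α : Type*} {E : α → Type*} [∀ i, NormedAddCommGroup (E i)]
    {p : ℝ≥0∞} [Fact (1 ≤ p)] (hp : p ≠ ∞) (f : lp E p) :
    Tendsto (fun i => ‖f i‖) cofinite (𝓝 0) := by
  have hp' : 0 < p.toReal := ENNReal.toReal_pos (zero_lt_one.trans_le Fact.out).ne' hp
  have h := (((lp.memℓp f).summable hp').tendsto_cofinite_zero).rpow_const
    (p := p.toReal⁻¹) (Or.inr (inv_nonneg.mpr hp'.le))
  simpa [← Real.rpow_mul (norm_nonneg _), mul_inv_cancel₀ hp'.ne', Real.zero_rpow, hp'.ne'] using h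

theorem e_apply (n k : ℕ) : e n k = if k = n then 1 else 0 := by
  simp [e, Pi.single_apply]

theorem apply_eq_of_apply_e_eq_zero (T : H →L[ℂ] H) (z : H) {k m : ℕ}
    (h : ∀ n ≠ m, T (e n) k = 0) : T z k = z m * T (e m) k := by
  have hs := (lp.hasSum_single ENNReal.ofNat_ne_top z).mapL ((lp.evalCLM ℂ _ 2 k).comp T)
  have hterm : ∀ n, lp.single 2 n (z n) = z n • e n := fun n => by
    rw [e, ← lp.single_smul, smul_eq_mul, mul_one]
  have heval : ∀ x : H, lp.evalCLM ℂ _ 2 k x = x k := fun _ => rfl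
  simp only [hterm, map_smul, ContinuousLinearMap.comp_apply, heval, smul_eq_mul] at hs
  rw [← hs.tsum_eq, tsum_eq_single m fun n hn => by rw [h n hn, mul_zero]]

namespace TAnalytic

variable {α β : ℂ} {T : H →L[ℂ] H}
  (hT0 : T (e 0) = (α * conj β) • e 0 + β • e 1)
  (hTn : ∀ n : ℕ, 1 ≤ n → T (e n) = e (n + 1))

include hT0 in
theorem apply_e_zero (k : ℕ) : T (e 0) k = α * conj β * e 0 k + β * e 1 k := by
  rw [hT0]; rfl

include hTn in
theorem apply_of_le_one (z : H) {k : ℕ} (hk : k ≤ 1) : T z k = z 0 * T (e 0) k :=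
  apply_eq_of_apply_e_eq_zero T z fun n hn => by
    obtain ⟨n, rfl⟩ := Nat.exists_eq_succ_of_ne_zero hn
    simp [hTn (n + 1) n.succ_pos, e_apply]
    omega

include hT0 hTn

theorem apply_zero (z : H) : T z 0 = α * conj β * z 0 := by
  simp [apply_of_le_one hTn z zero_le_one, apply_e_zero hT0, e_apply, mul_comm]

theorem apply_one (z : H) : T z 1 = β * z 0 := by
  simp [apply_of_le_one hTn z le_rfl, apply_e_zero hT0, e_apply, mul_comm]

theorem apply_add_two (z : H) (k : ℕ) : T z (k + 2) = z (k + 1) := by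
  rw [apply_eq_of_apply_e_eq_zero T z fun n hn => ?_, hTn (k + 1) k.succ_pos]
  · simp [e_apply]
  · rcases n with _ | n
    · simp [apply_e_zero hT0, e_apply]
    · simp [hTn (n + 1) n.succ_pos, e_apply]
      omega

theorem pow_apply_zero (n : ℕ) (z : H) : (T ^ n) z 0 = (α * conj β) ^ n * z 0 := by
  induction n with
  | zero => simp
  | succ n ih => rw [pow_succ', mul_apply_eq_comp, apply_zero hT0 hTn, ih]; ring

theorem pow_apply_succ (j i : ℕ) (z : H) :
    (T ^ (j + i + 1)) z (i + 1) = β * (α * conj β) ^ j * z 0 := by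
  induction i with
  | zero =>
    rw [add_zero, pow_succ', mul_apply_eq_comp, apply_one hT0 hTn,
      pow_apply_zero hT0 hTn, mul_assoc]
  | succ i ih =>
    rw [← add_assoc, pow_succ', mul_apply_eq_comp, apply_add_two hT0 hTn, ih]

theorem pow_apply_succ_eq_mul (j i : ℕ) (z : H) :
    (T ^ (j + i + 1)) z (i + 1) = (α * conj β) ^ j * (T ^ (j + i + 1)) z (j + i + 1) := by
  have h := pow_apply_succ hT0 hTn 0 (j + i) z
  rw [zero_add] at h
  rw [h, pow_apply_succ hT0 hTn]
  ring

theorem apply_eq_zero_of_forall_mem_range_pow (hβ : β ≠ 0) (hc : ‖α * conj β‖ ≤ 1) {y : H}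
    (hy : ∀ n ≥ 1, y ∈ Set.range ⇑(T ^ n)) (k : ℕ) : y k = 0 := by
  have hsucc : ∀ i, y (i + 1) = 0 := fun i => by
    have hle : ∀ j, ‖y (i + 1)‖ ≤ ‖y (j + i + 1)‖ := fun j => by
      obtain ⟨z, rfl⟩ := hy (j + i + 1) (by omega)
      rw [pow_apply_succ_eq_mul hT0 hTn, norm_mul, norm_pow]
      exact mul_le_of_le_one_left (norm_nonneg _) (pow_le_one₀ (norm_nonneg _) hc)
    have htend : Tendsto (fun j => ‖y (j + i + 1)‖) atTop (𝓝 0) :=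
      (Nat.cofinite_eq_atTop ▸ lp.tendsto_norm_apply_cofinite ENNReal.ofNat_ne_top y).comp
        (tendsto_add_atTop_nat (i + 1))
    exact norm_le_zero_iff.mp (ge_of_tendsto' htend hle)
  obtain ⟨z, rfl⟩ := hy 1 le_rfl
  have hz : z 0 = 0 := by
    simpa [apply_one hT0 hTn, hβ] using hsucc 0
  rcases k with _ | i
  · rw [pow_one, apply_zero hT0 hTn, hz, mul_zero]
  · exact hsucc i

end TAnalytic

open TAnalytic in
theorem T_analytic_general (α β : ℂ) (hβ : β ≠ 0)
    (hnorm : ‖α‖ ^ 2 + ‖β‖ ^ 2 = 1)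
    (T : H →L[ℂ] H)
    (hT0 : T (e 0) = (α * conj β) • e 0 + β • e 1)
    (hTn : ∀ n : ℕ, 1 ≤ n → T (e n) = e (n + 1)) :
    (⋂ n ∈ Set.Ici 1, Set.range (⇑(T ^ n))) = ({0} : Set H) := by
  have hc : ‖α * conj β‖ ≤ 1 := by
    rw [norm_mul, Complex.norm_conj]
    nlinarith [sq_nonneg (‖α‖ - ‖β‖)]
  ext y
  simp only [Set.mem_iInter, Set.mem_Ici, Set.mem_singleton_iff]
  refine ⟨fun hy => lp.ext (funext (apply_eq_zero_of_forall_mem_range_pow hT0 hTn hβ hc hy)), ?_⟩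
  rintro rfl n _
  exact ⟨0, map_zero _⟩

/-- `T_{α,β}` is analytic: `⋂_{n ≥ 1} T^n(H) = {0}`. -/
theorem T_analytic (α β : ℂ) (hα : α ≠ 0) (hβ : β ≠ 0)
    (hnorm : ‖α‖ ^ 2 + ‖β‖ ^ 2 = 1)
    (T : H →L[ℂ] H)
    (hT0 : T (e 0) = (α * conj β) • e 0 + β • e 1)
    (hTn : ∀ n : ℕ, 1 ≤ n → T (e n) = e (n + 1)) :
    (⋂ n ∈ Set.Ici 1, Set.range (⇑(T ^ n))) = ({0} : Set H) :=
  T_analytic_general α β hβ hnorm T hT0 hTn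

end
end
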